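/- arXiv:2411.01320 — 7 statements merged into one kernel-verified Lean document; each statement's English description precedes it below -/
import Mathlib

section
/- If f : R → F is a multiplicative polynomial map on a finite-dimensional unital algebra R over an infinite field F (i.e., f(ab) = f(a)f(b) for all a, b ∈ R) with f not identically zero, then f is homogeneous of some degree k and f(1) = 1. -/
/-!
Restricted to the line `F • 1`, the map `f` becomes a one-variable polynomial `q` with
`q (x * y) = q x * q y`. Over an infinite field this forces `q a = a ^ deg q`, and then
`f (a • r) = f ((a • 1) * r) = a ^ deg q * f r`.
-/

/-- `f : R → F` is a polynomial map with respect to the finite basis `b`: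
it is given by a polynomial in the coordinates. -/
def IsPolyMap {F R ι : Type*} [Field F] [AddCommGroup R] [Module F R] [Fintype ι]
    (b : Module.Basis ι F R) (f : R → F) : Prop :=
  ∃ p : MvPolynomial ι F, ∀ r : R, f r = MvPolynomial.eval (fun i => b.repr r i) p

open Polynomial

/-- Comparing top coefficients of `q (a X) = q(a) q(X)` forces `q(a) = a ^ deg q`. -/
theorem Polynomial.eval_eq_pow_natDegree_of_eval_mul {F : Type*} [CommRing F] [IsDomain F]
    [Infinite F] {q : F[X]} (hq : q ≠ 0)
    (hmul : ∀ x y : F, q.eval (x * y) = q.eval x * q.eval y) (a : F) :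
    q.eval a = a ^ q.natDegree := by
  have hcomp : q.comp (C a * X) = C (q.eval a) * q :=
    Polynomial.funext fun x => by simp [eval_comp, ← hmul, mul_comm a x]
  have htop := congrArg (coeff · q.natDegree) hcomp
  simp only [comp_C_mul_X_coeff, coeff_C_mul, coeff_natDegree] at htop
  exact (mul_left_cancel₀ (leadingCoeff_ne_zero.mpr hq) (htop.trans (mul_comm _ _))).symm

theorem IsPolyMap.exists_eval_eq_apply_smul {F R ι : Type*} [Field F] [AddCommGroup R]
    [Module F R] [Fintype ι] {b : Module.Basis ι F R} {f : R → F} (hf : IsPolyMap b f) (v : R) :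
    ∃ q : F[X], ∀ a : F, q.eval a = f (a • v) := by
  obtain ⟨p, hp⟩ := hf
  refine ⟨MvPolynomial.aeval (fun i => C (b.repr v i) * X) p, fun a => ?_⟩
  rw [← coe_aeval_eq_eval, MvPolynomial.comp_aeval_apply, hp, MvPolynomial.aeval_eq_eval]
  simp only [map_mul, aeval_C, aeval_X, map_smul, Finsupp.smul_apply, smul_eq_mul,
    Algebra.algebraMap_self, RingHom.id_apply, mul_comm]

theorem map_one_of_map_mul_of_ne_zero {R M : Type*} [MulOneClass R] [MonoidWithZero M]
    [IsLeftCancelMulZero M] {f : R → M} (hmul : ∀ x y : R, f (x * y) = f x * f y)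
    (hne : f ≠ 0) : f 1 = 1 := by
  obtain ⟨r, hr⟩ := Function.ne_iff.mp hne
  exact mul_left_cancel₀ hr (by rw [← hmul, mul_one, mul_one])

theorem stmt0_general {F R ι : Type*} [Field F] [Infinite F] [NonAssocRing R] [Module F R]
    [IsScalarTower F R R] [Fintype ι]
    (b : Module.Basis ι F R) (f : R → F) (hpoly : IsPolyMap b f)
    (hmul : ∀ x y : R, f (x * y) = f x * f y) (hne : f ≠ 0) :
    (∃ k : ℕ, ∀ (α : F) (r : R), f (α • r) = α ^ k * f r) ∧ f 1 = 1 := by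
  have hf1 : f 1 = 1 := map_one_of_map_mul_of_ne_zero hmul hne
  have smul_one_mul (α : F) (r : R) : (α • 1 : R) * r = α • r := by
    rw [smul_mul_assoc, one_mul]
  obtain ⟨q, hq⟩ := hpoly.exists_eval_eq_apply_smul (1 : R)
  have hq_mul (x y : F) : q.eval (x * y) = q.eval x * q.eval y := by
    rw [hq, hq, hq, ← hmul, smul_one_mul, smul_smul]
  have hq_ne : q ≠ 0 := by
    rintro rfl
    simpa [hf1] using hq 1
  refine ⟨⟨q.natDegree, fun α r => ?_⟩, hf1⟩
  rw [← smul_one_mul, hmul, ← hq, eval_eq_pow_natDegree_of_eval_mul hq_ne hq_mul]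

/-- If `f : R → F` is a multiplicative polynomial map on a finite-dimensional unital
(not necessarily associative) algebra `R` over an infinite field `F`, not identically zero,
then `f` is homogeneous of some degree `k` and `f 1 = 1`. -/
theorem stmt0 {F R ι : Type*} [Field F] [Infinite F] [NonAssocRing R] [Module F R]
    [SMulCommClass F R R] [IsScalarTower F R R] [Fintype ι]
    (b : Module.Basis ι F R) (f : R → F) (hpoly : IsPolyMap b f)
    (hmul : ∀ x y : R, f (x * y) = f x * f y) (hne : f ≠ 0) :
    (∃ k : ℕ, ∀ (α : F) (r : R), f (α • r) = α ^ k * f r) ∧ f 1 = 1 :=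
  stmt0_general b f hpoly hmul hne
end

section
/- Let R be a finite-dimensional associative unital algebra over an infinite field F with basis a_1,…,a_m, and let x = Σ x_i a_i be the generic element over K = F(x_1,…,x_m). Then the minimal polynomial P(t) of x over K has coefficients in the polynomial ring A = F[x_1,…,x_m]. -/
open TensorProduct

variable {F R ι : Type*}

/-- The polynomial function on `R` attached to a polynomial in the coordinates
along the basis `b`. -/
noncomputable def polyFun [Field F] [Ring R] [Algebra F R] [Fintype ι]
    (b : Module.Basis ι F R) (p : MvPolynomial ι F) : R → F :=
  fun r => MvPolynomial.eval (fun i => b.repr r i) p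

/-- The abstract characteristic polynomial `χ_a(t) = N(t·1 - a)` of an element `a`,
for the polynomial map attached to `p`. -/
noncomputable def charPolyOf [Field F] [Ring R] [Algebra F R] [Fintype ι]
    (b : Module.Basis ι F R) (p : MvPolynomial ι F) (a : R) : Polynomial F :=
  MvPolynomial.aeval
    (fun i => Polynomial.C (b.repr 1 i) * Polynomial.X - Polynomial.C (b.repr a i)) p

/-- `p` defines a Cayley–Hamilton norm of degree `n` on `R` (w.r.t. the basis `b`):
homogeneous of degree `n`, multiplicative, and every element satisfies its abstract
characteristic polynomial. -/
structure IsCHNorm [Field F] [Ring R] [Algebra F R] [Fintype ι]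
    (b : Module.Basis ι F R) (n : ℕ) (p : MvPolynomial ι F) : Prop where
  homog : ∀ (α : F) (r : R), polyFun b p (α • r) = α ^ n * polyFun b p r
  mult : ∀ x y : R, polyFun b p (x * y) = polyFun b p x * polyFun b p y
  ch : ∀ a : R, Polynomial.aeval a (charPolyOf b p a) = 0

/-- The generic element `x = Σ xᵢ aᵢ` of `R ⊗ K`, `K` the rational function field. -/
noncomputable def genElt [Field F] [Ring R] [Algebra F R] [Fintype ι] (b : Module.Basis ι F R) :
    FractionRing (MvPolynomial ι F) ⊗[F] R :=
  ∑ i, algebraMap (MvPolynomial ι F) (FractionRing (MvPolynomial ι F)) (MvPolynomial.X i)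
    ⊗ₜ[F] b i

/-!
The generic element is the image of `∑ Xᵢ ⊗ aᵢ ∈ A ⊗_F R`, and `A ⊗_F R` is a finite
`A`-module, so `x` is integral over `A`. Hence `minpoly_K x` divides the monic polynomial
`minpoly_A x`, and since `A` is integrally closed, Gauss's lemma puts the monic factor
`minpoly_K x` back in `A[t]`.
-/

namespace minpoly

theorem mem_lifts_of_isIntegrallyClosed {A K S : Type*} [CommRing A] [IsDomain A]
    [IsIntegrallyClosed A] [Field K] [Algebra A K] [IsFractionRing A K] [Ring S] [Algebra A S]
    [Algebra K S] [IsScalarTower A K S] {x : S} (hx : IsIntegral A x) :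
    minpoly K x ∈ Polynomial.lifts (algebraMap A K) := by
  obtain ⟨p, hp⟩ := IsIntegrallyClosed.eq_map_mul_C_of_dvd K (minpoly.monic hx)
    (minpoly.dvd_map_of_isScalarTower A K x)
  rw [(minpoly.monic hx.tower_top).leadingCoeff, Polynomial.C_1, mul_one] at hp
  exact ⟨p, by rw [Polynomial.coe_mapRingHom, hp]⟩

end minpoly

theorem isIntegral_genElt [Field F] [Ring R] [Algebra F R] [Fintype ι]
    (b : Module.Basis ι F R) : IsIntegral (MvPolynomial ι F) (genElt b) := by
  have := Module.Finite.of_basis b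
  have hgen : genElt b = Algebra.TensorProduct.map (IsScalarTower.toAlgHom (MvPolynomial ι F)
      (MvPolynomial ι F) (FractionRing (MvPolynomial ι F))) (AlgHom.id F R)
      (∑ i, MvPolynomial.X i ⊗ₜ[F] b i) := by
    simp [genElt]
  rw [hgen]
  exact (Algebra.IsIntegral.isIntegral _).map _

theorem stmt3_general [Field F] [Ring R] [Algebra F R]
    [Fintype ι] (b : Module.Basis ι F R) (j : ℕ) :
    (minpoly (FractionRing (MvPolynomial ι F)) (genElt b)).coeff j ∈
      (algebraMap (MvPolynomial ι F) (FractionRing (MvPolynomial ι F))).range :=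
  (Polynomial.lifts_iff_coeff_lifts _).mp
    (minpoly.mem_lifts_of_isIntegrallyClosed (isIntegral_genElt b)) j

/-- The minimal polynomial of the generic element of a finite-dimensional associative
unital algebra has coefficients in the polynomial ring `F[x₁,…,x_m]`. -/
theorem stmt3 [Field F] [Infinite F] [Ring R] [Algebra F R] [FiniteDimensional F R]
    [Fintype ι] (b : Module.Basis ι F R) (j : ℕ) :
    (minpoly (FractionRing (MvPolynomial ι F)) (genElt b)).coeff j ∈
      (algebraMap (MvPolynomial ι F) (FractionRing (MvPolynomial ι F))).range :=
  stmt3_general b j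
end

section
/- If N is a CH-norm of degree n on an algebra R and f is a multiplicative polynomial map of degree m on R, then the product f · N is a CH-norm of degree n + m on R. -/
/-- `N : R → A` is a Cayley–Hamilton norm of degree `n` on the `A`-algebra `R`:
homogeneous of degree `n`, multiplicative, and every `a ∈ R` satisfies its abstract
characteristic polynomial `χ_a(t) = N(t - a)`. -/
structure IsCHNormA {A R : Type*} [CommRing A] [Ring R] [Algebra A R]
    (n : ℕ) (N : R → A) : Prop where
  homog : ∀ (a : A) (r : R), N (a • r) = a ^ n * N r
  mult : ∀ x y : R, N (x * y) = N x * N y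
  ch : ∀ r : R, ∃ χ : Polynomial A, χ.Monic ∧ χ.natDegree = n ∧
    (∀ u : A, Polynomial.eval u χ = N (algebraMap A R u - r)) ∧
    Polynomial.aeval r χ = 0

/-- If `N` is a CH-norm of degree `n` on `R` and `f` is a multiplicative polynomial map of
degree `m`, then `f · N` is a CH-norm of degree `n + m`. -/
theorem stmt6 {A R : Type*} [CommRing A] [Ring R] [Algebra A R] (n m : ℕ)
    (N f : R → A) (hN : IsCHNormA n N)
    (hfmul : ∀ x y : R, f (x * y) = f x * f y)
    (hfhom : ∀ (a : A) (r : R), f (a • r) = a ^ m * f r)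
    (hf1 : f 1 = 1)
    (hfpoly : ∀ r : R, ∃ ρ : Polynomial A, ρ.Monic ∧ ρ.natDegree = m ∧
      ∀ u : A, Polynomial.eval u ρ = f (algebraMap A R u - r)) :
    IsCHNormA (n + m) (fun r => f r * N r) := by
  constructor
  · intro a r
    simp only [hfhom, hN.homog]
    ring
  · intro x y
    simp only [hfmul, hN.mult]
    ring
  · intro r
    obtain ⟨χ, hχm, hχd, hχe, hχa⟩ := hN.ch r
    obtain ⟨ρ, hρm, hρd, hρe⟩ := hfpoly r
    refine ⟨χ * ρ, hχm.mul hρm, ?_, ?_, ?_⟩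
    · rw [hχm.natDegree_mul hρm, hχd, hρd]
    · intro u
      simp only [Polynomial.eval_mul, hχe, hρe]
      ring
    · simp [map_mul, hχa]
end

section
/- Let R be a finite-dimensional algebra over an infinite field F with minimal CH-norm of degree n. Then every element a ∈ R satisfies a monic polynomial of degree n over F, and there is a nonempty Zariski-open set U ⊆ R such that every element of U does not satisfy any nonzero polynomial of degree < n. -/
open TensorProduct

variable {F R ι : Type*}

/-!
Let `A = F[xᵢ]` with fraction field `K`. The generic element already lives in `A ⊗ R` as
`x = Σ xᵢ ⊗ bᵢ`, and it is integral over `A` because `A ⊗ R` is a finite `A`-module. Since `A` is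
integrally closed, the minimal polynomial of `x` over `K` has coefficients in `A`; it kills `x` in
`A ⊗ R` because `A ⊗ R → K ⊗ R` is injective. Evaluating the variables at the coordinates of `a`
sends `x` to `a`, which gives a monic polynomial of degree `n` that kills `a`.

The powers `1, x, …, x ^ (n - 1)` are `K`-linearly independent, so their coordinate matrix has a
nonzero `n × n` minor `u ∈ A`. If `u` does not vanish at the coordinates of `a`, the same minor for
`1, a, …, a ^ (n - 1)` is nonzero. Then these powers are linearly independent, so no nonzero
polynomial of degree `< n` kills `a`.
-/

open Polynomial

theorem Matrix.linearIndependent_col_of_det_submatrix_ne_zero {m n K : Type*} [Fintype n]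
    [DecidableEq n] [CommRing K] [IsDomain K] {M : Matrix m n K} {g : n → m}
    (h : (M.submatrix g id).det ≠ 0) : LinearIndependent K M.col :=
  (Matrix.linearIndependent_cols_of_det_ne_zero h).of_comp (LinearMap.funLeft K K g)

theorem Matrix.exists_det_submatrix_ne_zero_of_linearIndependent_col {m n K : Type*} [Fintype m]
    [Fintype n] [DecidableEq n] [Field K] {M : Matrix m n K} (hM : LinearIndependent K M.col) :
    ∃ g : n → m, (M.submatrix g id).det ≠ 0 := by
  have hrank : Module.finrank K (Submodule.span K (Set.range M.row)) = Fintype.card n := by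
    rw [← M.rank_eq_finrank_span_row, ← M.rank_transpose]
    exact LinearIndependent.rank_matrix (M := M.transpose) hM
  obtain ⟨κ, r, -, hspan, hli⟩ := exists_linearIndependent' K M.row
  have := hli.finite
  have := Fintype.ofFinite κ
  have hcard : Fintype.card n = Fintype.card κ := by
    rw [linearIndependent_iff_card_eq_finrank_span.1 hli, Set.finrank, hspan, hrank]
  let e := Fintype.equivOfCardEq hcard
  have hrows : LinearIndependent K (M.submatrix (r ∘ e) id).row := hli.comp e e.injective
  exact ⟨r ∘ e, ((Matrix.isUnit_iff_isUnit_det _).1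
    (Matrix.linearIndependent_rows_iff_isUnit.1 hrows)).ne_zero⟩

theorem Module.Basis.linearIndependent_iff_exists_det_submatrix_toMatrix_ne_zero
    {m n K V : Type*} [Fintype m] [Fintype n] [DecidableEq n] [Field K] [AddCommGroup V]
    [Module K V] (b : Module.Basis m K V) (v : n → V) :
    LinearIndependent K v ↔ ∃ g : n → m, ((b.toMatrix v).submatrix g id).det ≠ 0 := by
  rw [← b.equivFun.toLinearMap.linearIndependent_iff (LinearEquiv.ker _)]
  change LinearIndependent K (b.toMatrix v).col ↔ _
  exact ⟨Matrix.exists_det_submatrix_ne_zero_of_linearIndependent_col,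
    fun ⟨_, hg⟩ => Matrix.linearIndependent_col_of_det_submatrix_ne_zero hg⟩

theorem aeval_ne_zero_of_linearIndependent_pow {K S : Type*} [CommRing K] [Ring S] [Algebra K S]
    {a : S} {n : ℕ} (hli : LinearIndependent K fun j : Fin n => a ^ (j : ℕ)) {q : K[X]}
    (hq : q ≠ 0) (hdeg : q.natDegree < n) : aeval a q ≠ 0 := by
  intro h0
  rw [aeval_eq_sum_range' hdeg, ← Fin.sum_univ_eq_sum_range (fun i => q.coeff i • a ^ i)] at h0
  have hcoeff := Fintype.linearIndependent_iff.1 hli (fun j => q.coeff j) h0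
  refine hq (Polynomial.ext fun j => ?_)
  rcases lt_or_ge j n with hj | hj
  · exact hcoeff ⟨j, hj⟩
  · exact coeff_eq_zero_of_natDegree_lt (hdeg.trans_le hj)

section IntegrallyClosed

variable {A K L : Type*} [CommRing A] [IsIntegrallyClosed A] [Field K] [Algebra A K]
  [IsFractionRing A K] [Ring L] [Algebra K L] [Algebra A L] [IsScalarTower A K L]

theorem exists_monic_map_eq_minpoly {y : L} (hy : IsIntegral A y) :
    ∃ P : A[X], P.Monic ∧ P.map (algebraMap A K) = minpoly K y := by
  have hmonic : (minpoly K y).Monic := minpoly.monic hy.tower_top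
  obtain ⟨f, hf, hfy⟩ := hy
  have hdvd : minpoly K y ∣ f.map (algebraMap A K) :=
    minpoly.dvd K y (by rwa [aeval_map_algebraMap])
  obtain ⟨P, hP⟩ := IsIntegrallyClosed.eq_map_mul_C_of_dvd K hf hdvd
  rw [hmonic.leadingCoeff, C_1, mul_one] at hP
  exact ⟨P, (IsFractionRing.injective A K).monic_map_iff.2 (hP ▸ hmonic), hP⟩

theorem exists_monic_natDegree_eq_minpoly_aeval_eq_zero {S : Type*} [Ring S] [Algebra A S]
    (Φ : S →ₐ[A] L) (hΦ : Function.Injective Φ) {s : S} (hs : IsIntegral A s) :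
    ∃ P : A[X], P.Monic ∧ P.natDegree = (minpoly K (Φ s)).natDegree ∧ aeval s P = 0 := by
  obtain ⟨P, hPm, hP⟩ := exists_monic_map_eq_minpoly (K := K) (hs.map Φ)
  refine ⟨P, hPm, ?_, hΦ ?_⟩
  · rw [← hP, natDegree_map_eq_of_injective (IsFractionRing.injective A K)]
  · rw [map_zero, ← aeval_algHom_apply, ← aeval_map_algebraMap K, hP, minpoly.aeval]

end IntegrallyClosed

theorem Algebra.TensorProduct.map_id_injective {S A B M : Type*} [CommRing S] [CommRing A]
    [CommRing B] [Ring M] [Algebra S A] [Algebra S B] [Algebra S M] [Module.Flat S M]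
    {f : A →ₐ[S] B} (hf : Function.Injective f) :
    Function.Injective (Algebra.TensorProduct.map f (AlgHom.id S M)) :=
  Module.Flat.rTensor_preserves_injective_linearMap f.toLinearMap hf

section GenericElement

variable [Field F] [Ring R] [Algebra F R] (b : Module.Basis ι F R)

theorem Module.Basis.baseChange_toMatrix_map {A B n : Type*} [CommRing A] [CommRing B]
    [Algebra F A] [Algebra F B] (f : A →ₐ[F] B) (v : n → A ⊗[F] R) :
    (b.baseChange B).toMatrix (Algebra.TensorProduct.map f (AlgHom.id F R) ∘ v) =
      ((b.baseChange A).toMatrix v).map f := by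
  ext i j
  simp only [Module.Basis.toMatrix_apply, Function.comp_apply, Matrix.map_apply]
  induction v j using TensorProduct.induction_on with
  | zero => simp
  | tmul p m => simp [Module.Basis.baseChange_repr_tmul]
  | add y z hy hz => simp [hy, hz]

noncomputable def specializeAt (c : ι → F) : MvPolynomial ι F ⊗[F] R →ₐ[F] R :=
  (Algebra.TensorProduct.lid F R).toAlgHom.comp
    (Algebra.TensorProduct.map (MvPolynomial.aeval c) (AlgHom.id F R))

theorem toMatrix_specializeAt {n : Type*} (c : ι → F) (v : n → MvPolynomial ι F ⊗[F] R) :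
    b.toMatrix (specializeAt c ∘ v) =
      ((b.baseChange (MvPolynomial ι F)).toMatrix v).map (MvPolynomial.eval c) := by
  ext i j
  simp only [Module.Basis.toMatrix_apply, Function.comp_apply, Matrix.map_apply]
  induction v j using TensorProduct.induction_on with
  | zero => simp
  | tmul p m => simp [specializeAt, Module.Basis.baseChange_repr_tmul, mul_comm]
  | add y z hy hz => simp [hy, hz]

theorem aeval_specializeAt (c : ι → F) (z : MvPolynomial ι F ⊗[F] R)
    (P : (MvPolynomial ι F)[X]) :
    aeval (specializeAt c z) (P.map (MvPolynomial.eval c)) = specializeAt c (aeval z P) := by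
  refine (map_aeval_eq_aeval_map (ψ := (specializeAt (R := R) c).toRingHom)
    (RingHom.ext fun p => ?_) P z).symm
  simp only [RingHom.comp_apply, AlgHom.toRingHom_eq_coe, RingHom.coe_coe,
    Algebra.TensorProduct.algebraMap_apply]
  simp [specializeAt, Algebra.algebraMap_eq_smul_one]

variable (F R ι) in
noncomputable def toFracTensor :
    MvPolynomial ι F ⊗[F] R →ₐ[MvPolynomial ι F] FractionRing (MvPolynomial ι F) ⊗[F] R :=
  Algebra.TensorProduct.map (IsScalarTower.toAlgHom _ _ _) (AlgHom.id F R)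

-- Proved for the underlying `F`-algebra map, which is definitionally the same function.
theorem toFracTensor_injective : Function.Injective (toFracTensor F R ι) :=
  Algebra.TensorProduct.map_id_injective (f := IsScalarTower.toAlgHom F _ _)
    (IsFractionRing.injective _ _)

theorem toMatrix_toFracTensor {n : Type*} (v : n → MvPolynomial ι F ⊗[F] R) :
    (b.baseChange _).toMatrix (toFracTensor F R ι ∘ v) =
      ((b.baseChange _).toMatrix v).map (algebraMap _ (FractionRing (MvPolynomial ι F))) :=
  b.baseChange_toMatrix_map (IsScalarTower.toAlgHom F _ _) v

variable [Fintype ι]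

noncomputable def genEltPoly : MvPolynomial ι F ⊗[F] R :=
  ∑ i, MvPolynomial.X i ⊗ₜ[F] b i

theorem specializeAt_genEltPoly (a : R) :
    specializeAt (fun i => b.repr a i) (genEltPoly b) = a := by
  simp [genEltPoly, specializeAt, b.sum_repr]

theorem toFracTensor_genEltPoly : toFracTensor F R ι (genEltPoly b) = genElt b := by
  simp [toFracTensor, genEltPoly, genElt]

theorem exists_monic_natDegree_eq_aeval_eq_zero (a : R) :
    ∃ q : F[X], q.Monic ∧
      q.natDegree = (minpoly (FractionRing (MvPolynomial ι F)) (genElt b)).natDegree ∧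
      aeval a q = 0 := by
  have := Module.Finite.of_basis (b.baseChange (MvPolynomial ι F))
  have hint := IsIntegral.of_finite (MvPolynomial ι F) (genEltPoly b)
  obtain ⟨P, hPm, hPdeg, hP⟩ := exists_monic_natDegree_eq_minpoly_aeval_eq_zero
    (K := FractionRing (MvPolynomial ι F)) (toFracTensor F R ι) toFracTensor_injective hint
  refine ⟨P.map (MvPolynomial.eval fun i => b.repr a i), hPm.map _, ?_, ?_⟩
  · rw [hPm.natDegree_map, hPdeg, toFracTensor_genEltPoly]
  · rw [← map_zero (specializeAt (R := R) fun i => b.repr a i), ← hP, ← aeval_specializeAt,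
      specializeAt_genEltPoly]

theorem exists_ne_zero_linearIndependent_pow_of_eval_ne_zero :
    ∃ u : MvPolynomial ι F, u ≠ 0 ∧ ∀ a : R, MvPolynomial.eval (fun i => b.repr a i) u ≠ 0 →
      LinearIndependent F
        fun j : Fin (minpoly (FractionRing (MvPolynomial ι F)) (genElt b)).natDegree =>
          a ^ (j : ℕ) := by
  classical
  set n := (minpoly (FractionRing (MvPolynomial ι F)) (genElt b)).natDegree
  set P := (b.baseChange (MvPolynomial ι F)).toMatrix fun j : Fin n => genEltPoly b ^ (j : ℕ)
  obtain ⟨g, hg⟩ :=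
    ((b.baseChange _).linearIndependent_iff_exists_det_submatrix_toMatrix_ne_zero _).1
      (linearIndependent_pow (genElt b))
  have hPK : (b.baseChange _).toMatrix (fun j : Fin n => genElt b ^ (j : ℕ)) =
      P.map (algebraMap _ (FractionRing (MvPolynomial ι F))) := by
    rw [← toMatrix_toFracTensor]
    congr 1
    funext j
    rw [Function.comp_apply, map_pow, toFracTensor_genEltPoly]
  have hPa (a : R) : b.toMatrix (fun j : Fin n => a ^ (j : ℕ)) =
      P.map (MvPolynomial.eval fun i => b.repr a i) := by
    rw [← toMatrix_specializeAt]
    congr 1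
    funext j
    rw [Function.comp_apply, map_pow, specializeAt_genEltPoly]
  refine ⟨(P.submatrix g id).det, fun h0 => hg ?_, fun a ha => ?_⟩
  · rw [hPK, Matrix.submatrix_map, ← RingHom.mapMatrix_apply, ← RingHom.map_det, h0, map_zero]
  · refine (b.linearIndependent_iff_exists_det_submatrix_toMatrix_ne_zero _).2 ⟨g, ?_⟩
    rwa [hPa, Matrix.submatrix_map, ← RingHom.mapMatrix_apply, ← RingHom.map_det]

end GenericElement

theorem stmt9_general [Field F] [Ring R] [Algebra F R]
    [Fintype ι] (b : Module.Basis ι F R) :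
    (∀ a : R, ∃ q : Polynomial F, q.Monic ∧
      q.natDegree = (minpoly (FractionRing (MvPolynomial ι F)) (genElt b)).natDegree ∧
      Polynomial.aeval a q = 0) ∧
    ∃ u : MvPolynomial ι F, u ≠ 0 ∧
      ∀ a : R, MvPolynomial.eval (fun i => b.repr a i) u ≠ 0 →
        ∀ q : Polynomial F, q ≠ 0 →
          q.natDegree < (minpoly (FractionRing (MvPolynomial ι F)) (genElt b)).natDegree →
          Polynomial.aeval a q ≠ 0 := by
  obtain ⟨u, hu, hli⟩ := exists_ne_zero_linearIndependent_pow_of_eval_ne_zero b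
  exact ⟨exists_monic_natDegree_eq_aeval_eq_zero b, u, hu,
    fun a ha _ hq hdeg => aeval_ne_zero_of_linearIndependent_pow (hli a ha) hq hdeg⟩

/-- If `n` is the degree of the minimal CH-norm (= degree of the minimal polynomial of the
generic element), every `a ∈ R` satisfies a monic polynomial of degree `n` over `F`, and
there is a nonempty Zariski-open set (the nonvanishing locus of a nonzero polynomial `u` in
the coordinates) on which no element satisfies a nonzero polynomial of degree `< n`. -/
theorem stmt9 [Field F] [Infinite F] [Ring R] [Algebra F R] [FiniteDimensional F R]
    [Fintype ι] (b : Module.Basis ι F R) :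
    (∀ a : R, ∃ q : Polynomial F, q.Monic ∧
      q.natDegree = (minpoly (FractionRing (MvPolynomial ι F)) (genElt b)).natDegree ∧
      Polynomial.aeval a q = 0) ∧
    ∃ u : MvPolynomial ι F, u ≠ 0 ∧
      ∀ a : R, MvPolynomial.eval (fun i => b.repr a i) u ≠ 0 →
        ∀ q : Polynomial F, q ≠ 0 →
          q.natDegree < (minpoly (FractionRing (MvPolynomial ι F)) (genElt b)).natDegree →
          Polynomial.aeval a q ≠ 0 :=
  stmt9_general b
end

section
/- Let A be an integral domain containing an infinite field F and let B be its integral closure in its fraction field, with B ≠ A. If in addition the characteristic of F does not divide the relevant binomial coefficients (e.g., characteristic 0), then there is no multiplicative norm map N : B → A of degree n with N(a) = a^n for elements scaled from A; more precisely, for any a ∈ B \ A one derives n·f·a ∈ A for a nonzero f ∈ F (a Vandermonde determinant), contradicting a ∉ A when n is invertible. Hence no degree-n multiplicative A-valued norm exists on B. -/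
open Polynomial

/-- Auxiliary: every coefficient of a Lagrange interpolation at natural-number nodes,
with values in a subring `S` containing the needed inverses, lies in `S`. -/
lemma interpolate_coeff_mem_aux {K : Type*} [Field K] (S : Subring K)
    (hinv : ∀ i j : ℕ, (((i : K)) - ((j : K)))⁻¹ ∈ S)
    (hnat : ∀ i : ℕ, ((i : K)) ∈ S)
    (s : Finset ℕ) (r : ℕ → K) (hr : ∀ i ∈ s, r i ∈ S) (k : ℕ) :
    (Lagrange.interpolate s (fun i : ℕ => (i : K)) r).coeff k ∈ S := by
  classical
  set T : Subring (Polynomial K) := (Polynomial.mapRingHom S.subtype).range with hT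
  have hTcoeff : ∀ p ∈ T, ∀ k, p.coeff k ∈ S := by
    intro p hp k
    obtain ⟨q, rfl⟩ := hp
    rw [Polynomial.coe_mapRingHom, Polynomial.coeff_map]
    exact SetLike.coe_mem _
  have hC : ∀ c ∈ S, (Polynomial.C c : Polynomial K) ∈ T :=
    fun c hc => ⟨Polynomial.C ⟨c, hc⟩, by simp⟩
  have hX : (Polynomial.X : Polynomial K) ∈ T := ⟨Polynomial.X, by simp⟩
  apply hTcoeff
  rw [Lagrange.interpolate_apply]
  refine Subring.sum_mem _ fun i hi => Subring.mul_mem _ (hC _ (hr i hi)) ?_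
  unfold Lagrange.basis
  refine Subring.prod_mem _ fun j hj => ?_
  unfold Lagrange.basisDivisor
  exact Subring.mul_mem _ (hC _ (hinv i j)) (Subring.sub_mem _ hX (hC _ (hnat j)))

/-- Let `A` be a domain containing an infinite field `F` of characteristic zero and let `B`
be the integral closure of `A` in its fraction field, with `B ≠ A`. Then there is no
multiplicative homogeneous `A`-valued norm of degree `n ≥ 1` on `B`. -/
theorem stmt11 {F A : Type*} [Field F] [Infinite F] [CharZero F]
    [CommRing A] [IsDomain A] [Algebra F A] (n : ℕ) (hn : 1 ≤ n)
    (x : FractionRing A) (hxB : x ∈ integralClosure A (FractionRing A))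
    (hxA : x ∉ (algebraMap A (FractionRing A)).range)
    (N : integralClosure A (FractionRing A) → A)
    (hmult : ∀ u v : integralClosure A (FractionRing A), N (u * v) = N u * N v)
    (hhom : ∀ (s : A) (u : integralClosure A (FractionRing A)), N (s • u) = s ^ n * N u)
    (h1 : N 1 = 1) : False := by
  classical
  have hA0 : CharZero A := charZero_of_injective_algebraMap (algebraMap F A).injective
  have hAK : Function.Injective (algebraMap A (FractionRing A)) :=
    IsFractionRing.injective A (FractionRing A)
  have hK0 : CharZero (FractionRing A) := charZero_of_injective_algebraMap hAK
  set S : Subring (FractionRing A) := (algebraMap A (FractionRing A)).range with hSdef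
  have hS_nat : ∀ i : ℕ, ((i : FractionRing A)) ∈ S := by
    intro i
    exact ⟨(i : A), by rw [map_natCast]⟩
  let g : F →+* FractionRing A := (algebraMap A (FractionRing A)).comp (algebraMap F A)
  have hg : ∀ c : F, g c ∈ S := fun c => ⟨algebraMap F A c, rfl⟩
  have hS_inv : ∀ d : ℤ, (((d : FractionRing A)))⁻¹ ∈ S := by
    intro d
    have h : ((d : FractionRing A))⁻¹ = g ((d : F))⁻¹ := by
      rw [map_inv₀, map_intCast]
    rw [h]
    exact hg _
  have hS_diff_inv : ∀ i j : ℕ, (((i : FractionRing A)) - ((j : FractionRing A)))⁻¹ ∈ S := by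
    intro i j
    have h : ((i : FractionRing A)) - ((j : FractionRing A)) = (((i : ℤ) - (j : ℤ) : ℤ) : FractionRing A) := by
      push_cast; ring
    rw [h]
    exact hS_inv _
  -- Step 1: every integral element has its n-th power in the image of A.
  have hBx : ∀ y : integralClosure A (FractionRing A),
      ∃ a : A, algebraMap A (FractionRing A) a = ((y : FractionRing A)) ^ n := by
    intro y
    obtain ⟨p, q, hq, hy⟩ := IsFractionRing.div_surjective (A := A) (y : FractionRing A)
    have hq0 : algebraMap A (FractionRing A) q ≠ 0 :=
      IsFractionRing.to_map_ne_zero_of_mem_nonZeroDivisors hq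
    have hqy : algebraMap A (FractionRing A) q * (y : FractionRing A)
        = algebraMap A (FractionRing A) p := by
      rw [← hy]
      field_simp
    have h2 : q • y = algebraMap A (integralClosure A (FractionRing A)) p := by
      apply Subtype.ext
      have hcoe : ((q • y : integralClosure A (FractionRing A)) : FractionRing A)
          = q • (y : FractionRing A) := rfl
      have hcoe2 : ((algebraMap A (integralClosure A (FractionRing A)) p :
          integralClosure A (FractionRing A)) : FractionRing A)
          = algebraMap A (FractionRing A) p := rfl
      rw [hcoe, hcoe2, Algebra.smul_def]
      exact hqy
    have h4 : N (algebraMap A (integralClosure A (FractionRing A)) p) = p ^ n := by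
      rw [Algebra.algebraMap_eq_smul_one, hhom, h1, mul_one]
    have h5 : q ^ n * N y = p ^ n := by
      rw [← hhom, h2, h4]
    refine ⟨N y, ?_⟩
    have h6 : (algebraMap A (FractionRing A) q) ^ n * algebraMap A (FractionRing A) (N y)
        = (algebraMap A (FractionRing A) q) ^ n * ((y : FractionRing A)) ^ n := by
      rw [← map_pow, ← map_mul, h5, map_pow, ← hqy, mul_pow, map_pow]
    exact mul_left_cancel₀ (pow_ne_zero n hq0) h6
  -- Step 2: evaluations of (X + C x)^n at naturals are in S.
  have heval : ∀ m : ℕ, ((m : FractionRing A) + x) ^ n ∈ S := by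
    intro m
    obtain ⟨a, ha⟩ := hBx (algebraMap A (integralClosure A (FractionRing A)) (m : A) + ⟨x, hxB⟩)
    refine ⟨a, ?_⟩
    rw [ha]
    have : ((algebraMap A (integralClosure A (FractionRing A)) (m : A) + ⟨x, hxB⟩ :
        integralClosure A (FractionRing A)) : FractionRing A)
        = algebraMap A (FractionRing A) (m : A) + x := rfl
    rw [this, map_natCast]
  -- Step 3: Lagrange interpolation shows all coefficients of (X + C x)^n are in S.
  have hinj : Set.InjOn (fun i : ℕ => (i : FractionRing A)) (Finset.range (n + 1)) :=
    fun a _ b _ h => Nat.cast_injective h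
  have hfdeg : ((Polynomial.X + Polynomial.C x) ^ n : Polynomial (FractionRing A)).degree
      < (Finset.range (n + 1)).card := by
    rw [Finset.card_range, Polynomial.degree_pow, Polynomial.degree_X_add_C]
    rw [nsmul_eq_mul, mul_one]
    exact_mod_cast Nat.lt_succ_self n
  have hinterp := Lagrange.eq_interpolate (v := fun i : ℕ => (i : FractionRing A))
    (s := Finset.range (n + 1)) hinj hfdeg
  have hcoeff : ∀ k, (((Polynomial.X + Polynomial.C x) ^ n :
      Polynomial (FractionRing A))).coeff k ∈ S := by
    intro k
    rw [hinterp]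
    apply interpolate_coeff_mem_aux S hS_diff_inv hS_nat
    intro i _
    simp only [Polynomial.eval_pow, Polynomial.eval_add, Polynomial.eval_X, Polynomial.eval_C]
    exact heval i
  -- Step 4: extract the subleading coefficient n * x.
  have hx_n : x * (n : FractionRing A) ∈ S := by
    have h := hcoeff (n - 1)
    rw [Polynomial.coeff_X_add_C_pow] at h
    have h1' : n - (n - 1) = 1 := by omega
    have h2' : n.choose (n - 1) = n := by
      rw [Nat.choose_symm hn, Nat.choose_one_right]
    rw [h1', h2', pow_one] at h
    exact h
  have hxS : x ∈ S := by
    have hne : ((n : ℤ) : FractionRing A) ≠ 0 := by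
      exact_mod_cast (by omega : (n : ℤ) ≠ 0)
    have h7 : x = (x * (n : FractionRing A)) * (((n : ℤ) : FractionRing A))⁻¹ := by
      push_cast
      push_cast at hne
      field_simp
    rw [h7]
    exact S.mul_mem hx_n (hS_inv (n : ℤ))
  exact hxA hxS
end

section
/- Let A be a domain, B an A-algebra, and T ⊆ B the set of A-torsion elements. If N : B → A is a norm of degree n (multiplicative homogeneous polynomial map), then N(a + b) = N(a) for all a ∈ B and b ∈ T, i.e., N factors through B/T. -/
/-- Let `A` be a domain, `B` an `A`-algebra, and let `N : B → A` be a norm of degree `n`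
(a multiplicative homogeneous polynomial map). Then `N (a + b) = N a` whenever `b` is an
`A`-torsion element, i.e. `N` factors through the torsion ideal. -/
theorem stmt12 {A B : Type*} [CommRing A] [IsDomain A] [Ring B] [Algebra A B]
    (n : ℕ) (N : B → A)
    (hmult : ∀ x y : B, N (x * y) = N x * N y)
    (hhom : ∀ (s : A) (x : B), N (s • x) = s ^ n * N x)
    (a b : B) (s : A) (hs : s ≠ 0) (hsb : s • b = 0) :
    N (a + b) = N a := by
  have h : s • (a + b) = s • a := by rw [smul_add, hsb, add_zero]
  have h2 := congrArg N h
  rw [hhom, hhom] at h2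
  exact mul_left_cancel₀ (pow_ne_zero n hs) h2
end

section
/- If N : B → A is a CH-norm of degree n on an A-algebra B, where A is a domain, then every A-torsion element of B is nilpotent of nilpotency degree at most n. -/
open TensorProduct

/-- If `N : B → A` is a CH-norm of degree `n` on an `A`-algebra `B`, `A` a domain, then
every `A`-torsion element of `B` is nilpotent of degree at most `n`. The CH-norm condition
is imposed after base change to `A[t]`, via an extension `N'` of `N` to `A[t] ⊗ B`, so that
the abstract characteristic polynomial `χ_b = N'(t ⊗ 1 - 1 ⊗ b)` makes sense. -/
theorem stmt13 {A B : Type*} [CommRing A] [IsDomain A] [Ring B] [Algebra A B]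
    (n : ℕ) (N : B → A) (N' : Polynomial A ⊗[A] B → Polynomial A)
    (hext : ∀ b : B, N' ((1 : Polynomial A) ⊗ₜ[A] b) = Polynomial.C (N b))
    (hmult : ∀ x y : Polynomial A ⊗[A] B, N' (x * y) = N' x * N' y)
    (hone : N' 1 = 1)
    (hhom : ∀ (q : Polynomial A) (x : Polynomial A ⊗[A] B), N' (q • x) = q ^ n * N' x)
    (hch : ∀ b : B,
      Polynomial.aeval b (N' ((Polynomial.X : Polynomial A) ⊗ₜ[A] (1 : B) -
        (1 : Polynomial A) ⊗ₜ[A] b)) = 0)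
    (b : B) (s : A) (hs : s ≠ 0) (hsb : s • b = 0) :
    b ^ n = 0 := by
  classical
  set χ := N' ((Polynomial.X : Polynomial A) ⊗ₜ[A] (1 : B) -
      (1 : Polynomial A) ⊗ₜ[A] b) with hχ
  have key : (Polynomial.C s) • ((Polynomial.X : Polynomial A) ⊗ₜ[A] (1 : B) -
      (1 : Polynomial A) ⊗ₜ[A] b)
      = (Polynomial.C s * Polynomial.X) • ((1 : Polynomial A) ⊗ₜ[A] (1 : B)) := by
    have h1 : (Polynomial.C s) • ((1 : Polynomial A) ⊗ₜ[A] b) = 0 := by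
      have : (Polynomial.C s) • ((1 : Polynomial A) ⊗ₜ[A] b)
          = (s • (1 : Polynomial A)) ⊗ₜ[A] b := by
        rw [smul_tmul', smul_eq_mul, mul_one, Polynomial.C_eq_algebraMap,
          Algebra.algebraMap_eq_smul_one]
      rw [this, smul_tmul, hsb, tmul_zero]
    rw [smul_sub, h1, sub_zero, smul_tmul', smul_tmul', smul_eq_mul, smul_eq_mul, mul_one]
  have hNs : (Polynomial.C s) ^ n * χ = (Polynomial.C s) ^ n * Polynomial.X ^ n := by
    have h2 := hhom (Polynomial.C s) ((Polynomial.X : Polynomial A) ⊗ₜ[A] (1 : B) -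
      (1 : Polynomial A) ⊗ₜ[A] b)
    rw [key] at h2
    rw [hhom] at h2
    have hone1 : N' ((1 : Polynomial A) ⊗ₜ[A] (1 : B)) = 1 := by
      rw [← Algebra.TensorProduct.one_def, hone]
    rw [hone1, mul_one, mul_pow] at h2
    rw [← hχ] at h2
    exact h2.symm
  have hCn : (Polynomial.C s) ^ n ≠ 0 :=
    pow_ne_zero _ (by simpa using Polynomial.C_ne_zero.mpr hs)
  have hχX : χ = Polynomial.X ^ n := mul_left_cancel₀ hCn hNs
  have := hch b
  rw [← hχ, hχX] at this
  simpa using this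
end
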